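/- The K3 monodromy matrices are expressed through the map R in terms of the generators of Γ₀(6)₊: regarding all matrices over ℝ, M₀ = R(T₀⁻¹), M_{a₁} = −R(S₁), M_{a₂} = −R(S₂·S₁·S₂), and U = R(S₁·S₂). -/

import Mathlib

open Matrix

/-- `T₀ = [[1,1],[0,1]]`. -/
def T₀ : Matrix (Fin 2) (Fin 2) ℝ := !![1, 1; 0, 1]

/-- `S₁ = [[0,−1/√6],[√6,0]]`. -/
noncomputable def S₁ : Matrix (Fin 2) (Fin 2) ℝ := !![0, -1 / Real.sqrt 6; Real.sqrt 6, 0]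

/-- `S₂ = [[−√2,1/√2],[−3√2,√2]]`. -/
noncomputable def S₂ : Matrix (Fin 2) (Fin 2) ℝ :=
  !![-Real.sqrt 2, 1 / Real.sqrt 2; -3 * Real.sqrt 2, Real.sqrt 2]

/-- For a real 2×2 matrix `A = [[a,b],[c,d]]`, the 3×3 matrix
`R(A) = [[a², −2ac, −c²/6],[−ab, ad+bc, cd/6],[−6b², 12bd, d²]]`. -/
noncomputable def R (A : Matrix (Fin 2) (Fin 2) ℝ) : Matrix (Fin 3) (Fin 3) ℝ :=
  !![ (A 0 0)^2,        -2 * A 0 0 * A 1 0,               -(A 1 0)^2 / 6;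
      -(A 0 0 * A 0 1), A 0 0 * A 1 1 + A 0 1 * A 1 0,    A 1 0 * A 1 1 / 6;
      -6 * (A 0 1)^2,   12 * A 0 1 * A 1 1,               (A 1 1)^2 ]

/-- Monodromy matrix around `x = 0` (over ℝ). -/
def M₀ : Matrix (Fin 3) (Fin 3) ℝ := !![1, 0, 0; 1, 1, 0; -6, -12, 1]

/-- Monodromy matrix around `x = a₁` (over ℝ). -/
def Ma₁ : Matrix (Fin 3) (Fin 3) ℝ := !![0, 0, 1; 0, 1, 0; 1, 0, 0]

/-- Monodromy matrix around `x = a₂` (over ℝ). -/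
def Ma₂ : Matrix (Fin 3) (Fin 3) ℝ := !![-24, 120, 25; -10, 49, 10; 25, -120, -24]

/-- The connection matrix `U` (over ℝ). -/
def U : Matrix (Fin 3) (Fin 3) ℝ := !![3, 12, -2; 1, 5, -1; -2, -12, 3]

/-! Up to a change of basis, `R` is the symmetric square of `A ↦ Aᵀ`, so it reverses products:
`R (A * B) = R B * R A`. Every identity therefore reduces to the images of `T₀⁻¹`, `S₁` and `S₂`,
which are integral because the entries of `R` are quadratic and only `√6 ^ 2` and `√2 ^ 2` occur. -/

theorem R_mul_rev (A B : Matrix (Fin 2) (Fin 2) ℝ) : R (A * B) = R B * R A := by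
  ext i j
  fin_cases i <;> fin_cases j <;>
    simp [R, Matrix.mul_apply, Fin.sum_univ_succ] <;> ring

theorem T₀_inv : T₀⁻¹ = !![1, -1; 0, 1] :=
  inv_eq_right_inv <| by simp [T₀, one_fin_two]

theorem R_S₁ : R S₁ = -Ma₁ := by
  ext i j
  fin_cases i <;> fin_cases j <;> norm_num [R, S₁, Ma₁, div_pow]

theorem R_S₂ : R S₂ = !![2, -12, -3; 1, -5, -1; -3, 12, 2] := by
  have h2 : Real.sqrt 2 ≠ 0 := by positivity
  ext i j
  fin_cases i <;> fin_cases j <;> norm_num [R, S₂, div_pow, mul_pow] <;> field_simp <;> norm_num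

/-- The K3 monodromy matrices expressed through `R` in terms of the generators of
`Γ₀(6)₊`: `M₀ = R(T₀⁻¹)`, `M_{a₁} = −R(S₁)`, `M_{a₂} = −R(S₂S₁S₂)`, `U = R(S₁S₂)`. -/
theorem monodromies_via_R :
    M₀ = R T₀⁻¹ ∧ Ma₁ = -R S₁ ∧ Ma₂ = -R (S₂ * S₁ * S₂) ∧ U = R (S₁ * S₂) := by
  refine ⟨?_, by rw [R_S₁, neg_neg], ?_, ?_⟩
  · rw [T₀_inv]
    ext i j
    fin_cases i <;> fin_cases j <;> norm_num [R, M₀]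
  · rw [R_mul_rev, R_mul_rev, R_S₁, R_S₂]
    ext i j
    fin_cases i <;> fin_cases j <;> norm_num [Ma₁, Ma₂, mul_fin_three]
  · rw [R_mul_rev, R_S₁, R_S₂]
    ext i j
    fin_cases i <;> fin_cases j <;> norm_num [Ma₁, U, mul_fin_three]
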